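/- arXiv:2111.11898 — 2 statements merged into one kernel-verified Lean document; each statement's English description precedes it below -/
import Mathlib

section
/- Let k be a field, f ∈ k[x_1,...,x_n] with f(0)=0 and all first partials of f vanishing at 0, and m ≥ 1. With f_{0,m} the degree-m jet polynomial in the mn variables (x_{ij})_{1≤i≤m,1≤j≤n} (the coefficient of t^m in f(Σ_i x_{i1}t^i,...,Σ_i x_{in}t^i)), the common zero locus of all partial derivatives of f_{0,m} equals the intersection ∩_{1≤j≤n, 0≤i≤m−1} Z((F_j)_{0,i}), where F_j = ∂f/∂x_j and Z((F_j)_{0,i}) is the zero set of the i-th jet coefficient of F_j. -/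
open MvPolynomial

/-- The `i`-th jet coefficient of `f` at the origin (see paper, Section 2). -/
noncomputable def jet (k : Type*) [Field k] (n m : ℕ)
    (f : MvPolynomial (Fin n) k) (i : ℕ) : MvPolynomial (Fin m × Fin n) k :=
  Polynomial.coeff
    (MvPolynomial.aeval
      (fun j : Fin n => ∑ ℓ : Fin m,
        Polynomial.C (MvPolynomial.X (ℓ, j)) * Polynomial.X ^ ((ℓ : ℕ) + 1))
      f : Polynomial (MvPolynomial (Fin m × Fin n) k)) i

/-- The substitution algebra homomorphism underlying `jet`. -/
noncomputable def jetSub (k : Type*) [Field k] (n m : ℕ) :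
    MvPolynomial (Fin n) k →ₐ[k] Polynomial (MvPolynomial (Fin m × Fin n) k) :=
  MvPolynomial.aeval (fun j : Fin n => ∑ ℓ : Fin m,
    Polynomial.C (MvPolynomial.X (ℓ, j)) * Polynomial.X ^ ((ℓ : ℕ) + 1))

lemma jet_eq_coeff (k : Type*) [Field k] (n m : ℕ) (f : MvPolynomial (Fin n) k) (i : ℕ) :
    jet k n m f i = Polynomial.coeff (jetSub k n m f) i := rfl

lemma keyX (k : Type*) [Field k] (n m : ℕ) (v : Fin m × Fin n) (j : Fin n) :
    (pderiv v).mapCoeffs (jetSub k n m (X j)) =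
      jetSub k n m (pderiv v.2 (X j)) •
        PolynomialModule.single (MvPolynomial (Fin m × Fin n) k) ((v.1 : ℕ) + 1)
          (1 : MvPolynomial (Fin m × Fin n) k) := by
  rw [jetSub, aeval_X, map_sum]
  simp only [Polynomial.C_mul_X_pow_eq_monomial, Derivation.mapCoeffs_monomial]
  by_cases h : v.2 = j
  · subst h
    rw [pderiv_X_self, map_one, one_smul]
    rw [Finset.sum_eq_single v.1]
    · rw [show ((v.1, v.2) : Fin m × Fin n) = v from rfl, pderiv_X_self]
    · intro b _ hb
      rw [pderiv_X_of_ne, PolynomialModule.single_zero]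
      exact fun e => hb (congrArg Prod.fst e)
    · simp
  · have h1 : (pderiv v.2) (X j : MvPolynomial (Fin n) k) = 0 :=
      pderiv_X_of_ne (fun e => h e.symm)
    have h2 : ∀ ℓ' : Fin m,
        (pderiv v) (X (ℓ', j) : MvPolynomial (Fin m × Fin n) k) = 0 := fun ℓ' =>
      pderiv_X_of_ne (fun e => h (congrArg Prod.snd e).symm)
    simp [h1, h2]

lemma key (k : Type*) [Field k] (n m : ℕ) (v : Fin m × Fin n) (f : MvPolynomial (Fin n) k) :
    (pderiv v).mapCoeffs (jetSub k n m f) =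
      jetSub k n m (pderiv v.2 f) •
        PolynomialModule.single (MvPolynomial (Fin m × Fin n) k) ((v.1 : ℕ) + 1)
          (1 : MvPolynomial (Fin m × Fin n) k) := by
  induction f using MvPolynomial.induction_on with
  | C a =>
      rw [show jetSub k n m (C a) = algebraMap k _ a from aeval_C _ a,
        Derivation.map_algebraMap, pderiv_C, map_zero, zero_smul]
  | add p q hp hq => simp only [map_add, hp, hq, add_smul]
  | mul_X p j hp =>
      rw [map_mul, Derivation.leibniz, hp, keyX, pderiv_mul, map_add, map_mul, map_mul,
        add_smul, smul_smul, smul_smul]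
      rw [mul_comm (jetSub k n m (X j)) (jetSub k n m ((pderiv v.2) p)), add_comm]

lemma pderiv_jet (k : Type*) [Field k] (n m : ℕ) (v : Fin m × Fin n)
    (f : MvPolynomial (Fin n) k) (i : ℕ) :
    pderiv v (jet k n m f i) =
      if (v.1 : ℕ) + 1 ≤ i then jet k n m (pderiv v.2 f) (i - ((v.1 : ℕ) + 1)) else 0 := by
  have h := congrArg (fun p => PolynomialModule.coeff p i) (key k n m v f)
  beta_reduce at h
  rw [Derivation.mapCoeffs_apply, PolynomialModule.smul_single_apply] at h
  simpa [jet_eq_coeff, smul_eq_mul, mul_one] using h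

/-- The critical locus of the jet polynomial `f_{0,m}` is the intersection
`∩_{1≤j≤n, 0≤i≤m−1} Z((F_j)_{0,i})` of the zero sets of the jet coefficients of the
partial derivatives `F_j = ∂f/∂x_j`. -/
theorem stmt2 (k : Type*) [Field k] (n m : ℕ) (hm : 1 ≤ m)
    (f : MvPolynomial (Fin n) k)
    (h0 : constantCoeff f = 0)
    (hcrit : ∀ j : Fin n, eval (0 : Fin n → k) (pderiv j f) = 0) :
    {x : Fin m × Fin n → k | ∀ v : Fin m × Fin n, eval x (pderiv v (jet k n m f m)) = 0}
      = {x : Fin m × Fin n → k |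
          ∀ j : Fin n, ∀ i : ℕ, i < m → eval x (jet k n m (pderiv j f) i) = 0} := by
  ext x
  simp only [Set.mem_setOf_eq]
  constructor
  · intro H j i hi
    have hl : m - 1 - i < m := by omega
    have h := H (⟨m - 1 - i, hl⟩, j)
    rw [pderiv_jet] at h
    simp only [if_pos (by simp; omega : (((⟨m - 1 - i, hl⟩ : Fin m) : ℕ)) + 1 ≤ m)] at h
    have : m - ((((⟨m - 1 - i, hl⟩ : Fin m) : ℕ)) + 1) = i := by simp; omega
    rwa [this] at h
  · intro H v
    rw [pderiv_jet]
    have hv := v.1.isLt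
    rw [if_pos (by omega)]
    exact H v.2 _ (by omega)
end

section
/- Let f_d ∈ ℂ[x_1,...,x_n] be a homogeneous polynomial of degree d ≥ 2 whose critical locus (the common zero set of its partial derivatives in ℂ^n) has dimension 0, i.e. consists only of the origin. Then for any formal power series x(t) ∈ (tℂ[[t]])^n and any integer m ≥ 0, one has min_{1≤j≤n} ord_t((∂f_d/∂x_j)(x(t))) > m if and only if ord_t(x(t)) > ⌊m/(d−1)⌋, where ord_t(x(t)) = min_j ord_t(x_j(t)). -/
open MvPolynomial

private lemma deg_of_coeff_ne_zero {σ : Type*} {R : Type*} [CommSemiring R]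
    {f : MvPolynomial σ R} {e : ℕ} (hf : f.IsHomogeneous e) {v : σ →₀ ℕ}
    (hv : coeff v f ≠ 0) : v.degree = e := by
  rw [Finsupp.degree_eq_weight_one]
  exact hf hv

private lemma pderiv_isHomog {n e : ℕ} {f : MvPolynomial (Fin n) ℂ}
    (hf : f.IsHomogeneous e) (j : Fin n) : (pderiv j f).IsHomogeneous (e - 1) := by
  conv_lhs => rw [f.as_sum]
  rw [map_sum]
  apply IsHomogeneous.sum
  intro v hv
  rw [pderiv_monomial]
  by_cases h : v j = 0
  · rw [h]
    simp only [Nat.cast_zero, mul_zero, map_zero]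
    exact isHomogeneous_zero _ _ _
  · apply isHomogeneous_monomial
    have hd : v.degree = e := deg_of_coeff_ne_zero hf (mem_support_iff.mp hv)
    have hle : Finsupp.single j 1 ≤ v :=
      Finsupp.single_le_iff.mpr (Nat.one_le_iff_ne_zero.mpr h)
    have hcanc : v - Finsupp.single j 1 + Finsupp.single j 1 = v := tsub_add_cancel_of_le hle
    have hds : (Finsupp.single j (1:ℕ)).degree = 1 := by
      exact Finsupp.degree_single j 1
    have hadd : (v - Finsupp.single j 1).degree + (Finsupp.single j (1:ℕ)).degree = v.degree := by
      rw [Finsupp.degree_eq_weight_one, ← map_add, hcanc]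
    omega

private lemma aeval_mul_homog {n e : ℕ} {A : Type*} [CommRing A] [Algebra ℂ A]
    {g : MvPolynomial (Fin n) ℂ} (hg : g.IsHomogeneous e) (a : A) (y : Fin n → A) :
    aeval (fun j => a * y j) g = a ^ e * aeval y g := by
  conv_lhs => rw [g.as_sum]
  conv_rhs => rw [g.as_sum]
  rw [map_sum, map_sum, Finset.mul_sum]
  refine Finset.sum_congr rfl fun v hv => ?_
  rw [aeval_monomial, aeval_monomial]
  have hd : v.degree = e := deg_of_coeff_ne_zero hg (mem_support_iff.mp hv)
  rw [Finsupp.prod, Finsupp.prod]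
  simp_rw [mul_pow]
  rw [Finset.prod_mul_distrib, Finset.prod_pow_eq_pow_sum]
  have : ∑ i ∈ v.support, v i = e := hd
  rw [this]
  ring

private lemma coeff_aeval_homog {n e r : ℕ} {g : MvPolynomial (Fin n) ℂ}
    (hg : g.IsHomogeneous e) (x : Fin n → PowerSeries ℂ)
    (hx : ∀ j, ∀ i < r, PowerSeries.coeff i (x j) = 0) :
    (∀ i < e * r, PowerSeries.coeff i (aeval x g) = 0) ∧
    PowerSeries.coeff (e * r) (aeval x g)
      = eval (fun j => PowerSeries.coeff r (x j)) g := by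
  choose y hy using fun j =>
    (PowerSeries.X_pow_dvd_iff.mpr (hx j) : (PowerSeries.X : PowerSeries ℂ) ^ r ∣ x j)
  have hxy : x = fun j => PowerSeries.X ^ r * y j := funext hy
  have key : aeval x g = PowerSeries.X ^ (e * r) * aeval y g := by
    rw [hxy, aeval_mul_homog hg, ← pow_mul, mul_comm r e]
  have hcr : ∀ j, PowerSeries.coeff r (x j) = PowerSeries.constantCoeff (R := ℂ) (y j) := by
    intro j
    rw [hxy]
    simpa using (PowerSeries.coeff_X_pow_mul (y j) r 0)
  have hconst : PowerSeries.constantCoeff (R := ℂ) (aeval y g)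
      = eval (fun j => PowerSeries.constantCoeff (R := ℂ) (y j)) g := by
    rw [aeval_def, eval₂_comp_left (PowerSeries.constantCoeff (R := ℂ))]
    have : (PowerSeries.constantCoeff (R := ℂ)).comp (algebraMap ℂ (PowerSeries ℂ)) = RingHom.id ℂ := by
      ext a; simp [PowerSeries.algebraMap_apply]
    rw [this]
    rfl
  constructor
  · intro i hi
    rw [key, PowerSeries.coeff_X_pow_mul', if_neg (by omega)]
  · have h0 : PowerSeries.coeff (e * r) (PowerSeries.X ^ (e * r) * aeval y g)
        = PowerSeries.coeff 0 (aeval y g) := by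
      simpa using PowerSeries.coeff_X_pow_mul (aeval y g) (e * r) 0
    rw [key, h0, PowerSeries.coeff_zero_eq_constantCoeff_apply, hconst]
    exact congrArg (eval · g) (funext fun j => (hcr j).symm)

/-- For a homogeneous `f_d` of degree `d ≥ 2` over `ℂ` whose critical locus is `{0}`,
for any `x(t) ∈ (tℂ[[t]])^n` and `m ≥ 0`:
`min_j ord_t((∂f_d/∂x_j)(x(t))) > m` iff `ord_t(x(t)) > ⌊m/(d−1)⌋`. -/
theorem stmt4 (n d : ℕ) (hd : 2 ≤ d) (fd : MvPolynomial (Fin n) ℂ)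
    (hhom : fd.IsHomogeneous d)
    (hcrit : ∀ x : Fin n → ℂ, (∀ j : Fin n, eval x (pderiv j fd) = 0) → x = 0)
    (x : Fin n → PowerSeries ℂ)
    (hx : ∀ j : Fin n, PowerSeries.constantCoeff (R := ℂ) (x j) = 0) (m : ℕ) :
    (∀ j : Fin n, (m : ℕ∞) < (MvPolynomial.aeval x (pderiv j fd)).order)
      ↔ ∀ j : Fin n, ((m / (d - 1) : ℕ) : ℕ∞) < (x j).order := by
  classical
  set e := d - 1 with he
  have he1 : 1 ≤ e := by omega
  set k := m / e with hk
  have hpd : ∀ j : Fin n, (pderiv j fd).IsHomogeneous e := fun j => pderiv_isHomog hhom j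
  -- helper: ↑a < order φ ↔ ∀ i ≤ a, coeff i φ = 0
  have horder : ∀ (φ : PowerSeries ℂ) (a : ℕ),
      ((a : ℕ∞) < φ.order ↔ ∀ i ≤ a, PowerSeries.coeff i φ = 0) := by
    intro φ a
    have hcast : ((a : ℕ∞) < φ.order) ↔ ((a : ℕ∞) < φ.order) := Iff.rfl
    rw [hcast]
    constructor
    · intro h i hi
      exact PowerSeries.coeff_of_lt_order i
        (lt_of_le_of_lt (by exact_mod_cast Nat.cast_le.mpr hi) h)
    · intro h
      have h1 : ((a + 1 : ℕ) : ℕ∞) ≤ φ.order :=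
        PowerSeries.nat_le_order φ (a + 1) (fun i hi => h i (by omega))
      exact lt_of_lt_of_le (by exact_mod_cast Nat.lt_succ_self a) h1
  constructor
  · -- forward
    intro h j
    by_contra hj
    -- there is some index ≤ k with nonzero coefficient
    have hex : ∃ i, ∃ j' : Fin n, PowerSeries.coeff i (x j') ≠ 0 := by
      by_contra hall
      push_neg at hall
      apply hj
      rw [horder]
      intro i _
      exact hall i j
    have hexk : ∃ i ≤ k, ∃ j' : Fin n, PowerSeries.coeff i (x j') ≠ 0 := by
      by_contra hall
      push_neg at hall
      apply hj
      rw [horder]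
      exact fun i hi => hall i hi j
    set r := Nat.find hex with hr
    obtain ⟨i0, hi0k, j0, hj0⟩ := hexk
    have hrk : r ≤ k := (Nat.find_le ⟨j0, hj0⟩).trans hi0k
    have hmin : ∀ i < r, ∀ j' : Fin n, PowerSeries.coeff i (x j') = 0 := by
      intro i hi j'
      by_contra hne
      exact Nat.find_min hex hi ⟨j', hne⟩
    set c : Fin n → ℂ := fun j' => PowerSeries.coeff r (x j') with hc
    have hcne : c ≠ 0 := by
      obtain ⟨j1, hj1⟩ := Nat.find_spec hex
      intro h0
      exact hj1 (by simpa [hc] using congrFun h0 j1)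
    have hnotall : ¬ ∀ j' : Fin n, eval c (pderiv j' fd) = 0 := fun hall => hcne (hcrit c hall)
    push_neg at hnotall
    obtain ⟨j2, hj2⟩ := hnotall
    have hco := (coeff_aeval_homog (hpd j2) x (fun j' i hi => hmin i hi j')).2
    have hcoeffne : PowerSeries.coeff (e * r) (aeval x (pderiv j2 fd)) ≠ 0 := by
      rw [hco]; exact hj2
    have hme : e * r ≤ m := le_trans (Nat.mul_le_mul_left e hrk) (by
      rw [hk, mul_comm]; exact Nat.div_mul_le_self m e)
    exact hcoeffne (((horder _ m).mp (h j2)) (e * r) hme)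
  · -- reverse
    intro h j
    rw [horder]
    intro i hi
    have hcoeffs : ∀ j' : Fin n, ∀ i' < k + 1, PowerSeries.coeff i' (x j') = 0 := by
      intro j' i' hi'
      exact ((horder (x j') k).mp (h j')) i' (by omega)
    have := (coeff_aeval_homog (hpd j) x hcoeffs).1
    apply this
    have hmlt : m < e * (k + 1) := by
      have h1 : e * k + m % e = m := by rw [hk]; exact Nat.div_add_mod m e
      have h2 : m % e < e := Nat.mod_lt m (by omega)
      have h3 : e * (k + 1) = e * k + e := by ring
      omega
    exact lt_of_le_of_lt hi hmlt
end
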